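/- Let p be an odd prime and let α₀ ∈ ℚ_p be a quadratic irrational with conjugate ᾱ₀. Let (α_n), (b_n) be the sequences produced by Algorithm (3) applied to α₀, and assume the expansion is periodic. Then the expansion is purely periodic if and only if ‖α₀‖_p ≥ 1 and ‖ᾱ₀‖_p < 1. -/

import Mathlib

/-!
Let `β n` be the orbit of the conjugate `ᾱ₀` under the same maps `x ↦ (x - b n)⁻¹` as `α n`; the
conjugation of `ℚ(α₀)` makes `β m = β n` whenever `α m = α n`. For two orbits `u, v` of these maps
that stay outside the open unit disc, `‖u (n+1) - v (n+1)‖ = ‖u n - v n‖ ‖u (n+1)‖ ‖v (n+1)‖`, and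
since `‖α n‖ ≥ p` at odd `n` the difference grows by a factor `p` every two steps: two bounded
orbits coincide. Hence periodicity of the digits gives periodicity of `α` and `β`, and (as
`α₀ ≠ ᾱ₀`) some `‖β n‖ < 1` along a periodic expansion. Because `‖b n‖ = ‖α n‖ ≥ 1`, with strict
inequality at odd `n`, once `‖β n‖ < 1` the conjugates stay in the closed unit disc and in the open
one at even indices; periodicity carries this back to `β 0`. Conversely, if `‖α₀‖ ≥ 1 > ‖ᾱ₀‖` these
bounds hold from the start, so `b n` is determined by `β (n+1)` through `β n = (β (n+1))⁻¹ + b n`,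
and periodicity propagates backwards from the pre-period down to `0`.
-/

/-- A rational number `a` is a `p`-adic fraction if `a * p^m` is an integer
for some natural number `m`, i.e. `a ∈ ℤ[1/p]`. -/
def IsPadicFrac (p : ℕ) (a : ℚ) : Prop := ∃ (m : ℕ) (z : ℤ), a * (p : ℚ) ^ m = (z : ℚ)

/-- `b` is Browkin's integral floor `s α`: the unique `p`-adic fraction with
`|b| < p/2` and `‖α - b‖_p < 1`. -/
def IsIntFloor (p : ℕ) [Fact p.Prime] (α : ℚ_[p]) (b : ℚ) : Prop :=
  IsPadicFrac p b ∧ |b| < (p : ℚ) / 2 ∧ ‖α - (b : ℚ_[p])‖ < 1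

/-- `b` is Browkin's fractional floor `t α`: the unique `p`-adic fraction with
`|b| < 1/2` and `‖α - b‖_p ≤ 1`. -/
def IsFracFloor (p : ℕ) [Fact p.Prime] (α : ℚ_[p]) (b : ℚ) : Prop :=
  IsPadicFrac p b ∧ |b| < 1 / 2 ∧ ‖α - (b : ℚ_[p])‖ ≤ 1

/-- Algorithm (3): `b n = s (α n)` for even `n`, `b n = t (α n)` for odd `n`,
and `α (n + 1) = (α n - b n)⁻¹`. -/
def Alg3 (p : ℕ) [Fact p.Prime] (α : ℕ → ℚ_[p]) (b : ℕ → ℚ) : Prop :=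
  (∀ n, Even n → IsIntFloor p (α n) (b n)) ∧
  (∀ n, Odd n → IsFracFloor p (α n) (b n)) ∧
  ∀ n, α (n + 1) = (α n - (b n : ℚ_[p]))⁻¹

theorem IsUltrametricDist.norm_sub_le_max {S : Type*} [SeminormedAddGroup S] [IsUltrametricDist S]
    (x y : S) : ‖x - y‖ ≤ max ‖x‖ ‖y‖ := by
  simpa [sub_eq_add_neg] using norm_add_le_max x (-y)

theorem IsUltrametricDist.norm_le_max_of_norm_sub_le {S : Type*} [SeminormedAddGroup S]
    [IsUltrametricDist S] {x y : S} {a B : ℝ} (hxy : ‖x - y‖ ≤ a) (hy : ‖y‖ ≤ B) :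
    ‖x‖ ≤ max a B :=
  (sub_add_cancel x y ▸ norm_add_le_max (x - y) y).trans (max_le_max hxy hy)

theorem norm_inv_sub_inv_sub {K : Type*} [NormedField K] {x y a : K} (hx : x ≠ a) (hy : y ≠ a) :
    ‖(x - a)⁻¹ - (y - a)⁻¹‖ = ‖x - y‖ * ‖(x - a)⁻¹‖ * ‖(y - a)⁻¹‖ := by
  rw [inv_sub_inv' (sub_ne_zero.mpr hx) (sub_ne_zero.mpr hy), norm_mul, norm_mul,
    sub_sub_sub_cancel_right, norm_sub_rev]
  ring

theorem ne_of_one_le_norm_inv_sub {K : Type*} [NormedField K] {x a : K}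
    (h : 1 ≤ ‖(x - a)⁻¹‖) : x ≠ a := by
  rintro rfl
  simp at h
  linarith

theorem eq_zero_of_bounded_of_mul_le_norm_add_two {E : Type*} [NormedAddGroup E] {d : ℕ → E}
    {c B : ℝ} (hc : 1 < c) (hd : ∀ n, c * ‖d n‖ ≤ ‖d (n + 2)‖) (hB : ∀ n, ‖d n‖ ≤ B) :
    d 0 = 0 := by
  have hpow : ∀ m, c ^ m * ‖d 0‖ ≤ ‖d (2 * m)‖ := by
    intro m
    induction m with
    | zero => simp
    | succ m ih =>
      calc c ^ (m + 1) * ‖d 0‖ = c * (c ^ m * ‖d 0‖) := by ring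
        _ ≤ c * ‖d (2 * m)‖ := by gcongr
        _ ≤ ‖d (2 * (m + 1))‖ := hd _
  by_contra h0
  have hpos : 0 < ‖d 0‖ := norm_pos_iff.mpr h0
  obtain ⟨m, hm⟩ := pow_unbounded_of_one_lt (B / ‖d 0‖) hc
  rw [div_lt_iff₀ hpos] at hm
  linarith [hpow m, hB (2 * m)]

theorem eq_of_orbits_bounded {K : Type*} [NormedField K] {c B : ℝ} (hc : 1 < c)
    {a u v : ℕ → K} (hu : ∀ n, u (n + 1) = (u n - a n)⁻¹) (hv : ∀ n, v (n + 1) = (v n - a n)⁻¹)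
    (hu1 : ∀ n, 1 ≤ ‖u (n + 1)‖) (hv1 : ∀ n, 1 ≤ ‖v (n + 1)‖)
    (hvc : ∀ n, c ≤ ‖v (n + 1)‖ ∨ c ≤ ‖v (n + 2)‖)
    (huB : ∀ n, ‖u n‖ ≤ B) (hvB : ∀ n, ‖v n‖ ≤ B) : u 0 = v 0 := by
  have hstep : ∀ n, ‖u n - v n‖ * ‖v (n + 1)‖ ≤ ‖u (n + 1) - v (n + 1)‖ := by
    intro n
    have hun := ne_of_one_le_norm_inv_sub (hu n ▸ hu1 n)
    have hvn := ne_of_one_le_norm_inv_sub (hv n ▸ hv1 n)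
    rw [hu, hv, norm_inv_sub_inv_sub hun hvn, ← hu, ← hv, mul_right_comm]
    exact le_mul_of_one_le_right (by positivity) (hu1 n)
  refine sub_eq_zero.mp (eq_zero_of_bounded_of_mul_le_norm_add_two hc (fun n => ?_)
    (B := B + B) fun n => (norm_sub_le _ _).trans (add_le_add (huB n) (hvB n)))
  have hprod : c ≤ ‖v (n + 1)‖ * ‖v (n + 2)‖ := by
    rcases hvc n with h | h
    · nlinarith [hv1 (n + 1)]
    · nlinarith [hv1 n]
  calc c * ‖u n - v n‖ ≤ ‖u n - v n‖ * ‖v (n + 1)‖ * ‖v (n + 2)‖ := by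
        rw [mul_assoc, mul_comm]; gcongr
    _ ≤ ‖u (n + 1) - v (n + 1)‖ * ‖v (n + 2)‖ := by gcongr; exact hstep n
    _ ≤ ‖u (n + 2) - v (n + 2)‖ := hstep (n + 1)

theorem exists_forall_le_of_eventually_periodic {f : ℕ → ℝ} {h k : ℕ} (hk : 1 ≤ k)
    (hper : ∀ n, h ≤ n → f (n + k) = f n) : ∃ B, ∀ n, f n ≤ B := by
  have hrange : Set.range f ⊆ f '' Set.Iio (h + k) := by
    rintro _ ⟨n, rfl⟩
    induction n using Nat.strong_induction_on with
    | _ n ih =>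
      by_cases hn : n < h + k
      · exact ⟨n, hn, rfl⟩
      · rw [← Nat.sub_add_cancel (by omega : k ≤ n), hper (n - k) (by omega)]
        exact ih (n - k) (by omega)
  obtain ⟨B, hB⟩ := ((Set.finite_Iio _).image f).bddAbove.mono hrange
  exact ⟨B, fun n => hB ⟨n, rfl⟩⟩

section Conjugation

open Polynomial IntermediateField

variable {K : Type*} [Field K] [CharZero K] {x : K} {r s : ℚ}

theorem isIntegral_of_sq_eq (hquad : x ^ 2 = r * x + s) : IsIntegral ℚ x :=
  ⟨X ^ 2 - C r * X - C s, by monicity!, by simp [hquad]⟩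

theorem minpoly_eq_of_sq_eq (hirr : ∀ q : ℚ, x ≠ q) (hquad : x ^ 2 = r * x + s) :
    minpoly ℚ x = X ^ 2 - C r * X - C s := by
  have hint := isIntegral_of_sq_eq hquad
  have hdeg : 2 ≤ (minpoly ℚ x).natDegree :=
    (minpoly.two_le_natDegree_iff hint).mpr fun ⟨q, hq⟩ => hirr q (by simp [← hq])
  refine (eq_of_monic_of_dvd_of_natDegree_le (minpoly.monic hint) (by monicity!)
    (minpoly.dvd ℚ x (by simp [hquad])) ?_).symm
  rwa [show (X ^ 2 - C r * X - C s : ℚ[X]).natDegree = 2 by compute_degree!]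

theorem exists_algHom_adjoin_gen_eq (hirr : ∀ q : ℚ, x ≠ q) (hquad : x ^ 2 = r * x + s) :
    ∃ σ : ℚ⟮x⟯ →ₐ[ℚ] K, σ (AdjoinSimple.gen ℚ x) = r - x := by
  have hint := isIntegral_of_sq_eq hquad
  refine ⟨(algHomAdjoinIntegralEquiv ℚ hint).symm ⟨r - x, ?_⟩,
    algHomAdjoinIntegralEquiv_symm_apply_gen ℚ hint _⟩
  refine mem_aroots.mpr ⟨minpoly.ne_zero hint, ?_⟩
  rw [minpoly_eq_of_sq_eq hirr hquad]
  simp only [map_sub, map_mul, map_pow, aeval_X, aeval_C, eq_ratCast]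
  linear_combination hquad

theorem exists_conj_orbit (σ : ℚ⟮x⟯ →ₐ[ℚ] K) {a : ℕ → ℚ} {u : ℕ → K} (hu0 : u 0 = x)
    (hu : ∀ n, u (n + 1) = (u n - a n)⁻¹) :
    ∃ v : ℕ → K, v 0 = σ (AdjoinSimple.gen ℚ x) ∧ (∀ n, v (n + 1) = (v n - a n)⁻¹) ∧
      ∀ m n, u m = u n → v m = v n := by
  have hmem : ∀ n, u n ∈ ℚ⟮x⟯ := by
    intro n
    induction n with
    | zero => exact hu0 ▸ mem_adjoin_simple_self ℚ x
    | succ n ih => exact hu n ▸ inv_mem (sub_mem ih (SubfieldClass.ratCast_mem _ _))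
  let w (n : ℕ) : ℚ⟮x⟯ := ⟨u n, hmem n⟩
  have hw : ∀ n, w (n + 1) = (w n - a n)⁻¹ := fun n => Subtype.ext (by simp [w, hu n])
  refine ⟨fun n => σ (w n), by simp only [w, hu0]; rfl, fun n => ?_,
    fun m n h => by simp only [w, h]⟩
  simp only [hw, map_inv₀, map_sub, map_ratCast]

end Conjugation

theorem Padic.natCast_le_norm_of_one_lt_norm {p : ℕ} [Fact p.Prime] {x : ℚ_[p]}
    (h : 1 < ‖x‖) : (p : ℝ) ≤ ‖x‖ := by
  simpa using le_of_not_gt ((Padic.norm_le_pow_iff_norm_lt_pow_add_one x 0).not.mp (by simpa))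

namespace IsPadicFrac

variable {p : ℕ} {a c : ℚ}

theorem sub (ha : IsPadicFrac p a) (hc : IsPadicFrac p c) : IsPadicFrac p (a - c) := by
  obtain ⟨m, z, hz⟩ := ha
  obtain ⟨n, w, hw⟩ := hc
  refine ⟨m + n, z * p ^ n - w * p ^ m, ?_⟩
  push_cast
  linear_combination (p : ℚ) ^ n * hz - (p : ℚ) ^ m * hw

variable [Fact p.Prime]

theorem exists_eq_pow_mul (ha : IsPadicFrac p a) {n : ℕ}
    (hn : ‖(a : ℚ_[p])‖ ≤ (p : ℝ) ^ (-n : ℤ)) : ∃ w : ℤ, a = p ^ n * w := by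
  obtain ⟨m, z, hz⟩ := ha
  have hp : (p : ℚ) ≠ 0 := by exact_mod_cast (Fact.out : p.Prime).ne_zero
  have hdvd : (p ^ (n + m) : ℤ) ∣ z := by
    rw [← Padic.norm_int_le_pow_iff_dvd, ← Rat.cast_intCast, ← hz]
    push_cast
    rw [norm_mul, norm_pow, Padic.norm_p, inv_pow, ← zpow_natCast, ← zpow_neg, neg_add,
      zpow_add₀ (by exact_mod_cast hp)]
    gcongr
  obtain ⟨w, rfl⟩ := hdvd
  refine ⟨w, mul_right_cancel₀ (pow_ne_zero m hp) ?_⟩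
  rw [hz]
  push_cast
  ring

theorem eq_zero_of_abs_lt (ha : IsPadicFrac p a) {n : ℕ}
    (hn : ‖(a : ℚ_[p])‖ ≤ (p : ℝ) ^ (-n : ℤ)) (habs : |a| < p ^ n) : a = 0 := by
  obtain ⟨w, rfl⟩ := ha.exists_eq_pow_mul hn
  have hp : (0 : ℚ) < p ^ n := by exact_mod_cast pow_pos (Fact.out : p.Prime).pos n
  rw [abs_mul, abs_of_pos hp, mul_lt_iff_lt_one_right hp] at habs
  rw [← Int.cast_abs, ← Int.cast_one, Int.cast_lt, Int.abs_lt_one_iff] at habs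
  simp [habs]

end IsPadicFrac

namespace Alg3

variable {p : ℕ} [Fact p.Prime] {α β : ℕ → ℚ_[p]} {b : ℕ → ℚ}

theorem norm_sub_le_one (halg : Alg3 p α b) (n : ℕ) : ‖α n - b n‖ ≤ 1 := by
  rcases Nat.even_or_odd n with hn | hn
  · exact (halg.1 n hn).2.2.le
  · exact (halg.2.1 n hn).2.2

theorem ne_ratCast (halg : Alg3 p α b) (hirr : ∀ q : ℚ, α 0 ≠ q) (n : ℕ) (q : ℚ) : α n ≠ q := by
  induction n generalizing q with
  | zero => exact hirr q
  | succ n ih =>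
    intro hq
    apply ih (b n + q⁻¹)
    rw [halg.2.2 n, inv_eq_iff_eq_inv] at hq
    push_cast
    rw [← hq]
    ring

theorem norm_sub_pos (halg : Alg3 p α b) (hirr : ∀ q : ℚ, α 0 ≠ q) (n : ℕ) :
    0 < ‖α n - b n‖ :=
  norm_pos_iff.mpr (sub_ne_zero.mpr (halg.ne_ratCast hirr n _))

theorem one_le_norm_succ (halg : Alg3 p α b) (hirr : ∀ q : ℚ, α 0 ≠ q) (n : ℕ) :
    1 ≤ ‖α (n + 1)‖ := by
  rw [halg.2.2 n, norm_inv, one_le_inv₀ (halg.norm_sub_pos hirr n)]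
  exact halg.norm_sub_le_one n

theorem one_le_norm (halg : Alg3 p α b) (hirr : ∀ q : ℚ, α 0 ≠ q) (hα0 : 1 ≤ ‖α 0‖) (n : ℕ) :
    1 ≤ ‖α n‖ := by
  cases n with
  | zero => exact hα0
  | succ n => exact halg.one_le_norm_succ hirr n

theorem one_lt_norm_of_odd (halg : Alg3 p α b) (hirr : ∀ q : ℚ, α 0 ≠ q) {n : ℕ}
    (hn : Odd n) : 1 < ‖α n‖ := by
  obtain ⟨m, rfl⟩ := hn
  rw [halg.2.2, norm_inv, one_lt_inv₀ (halg.norm_sub_pos hirr _)]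
  exact (halg.1 _ (even_two_mul m)).2.2

theorem natCast_le_norm_add_one_or_add_two (halg : Alg3 p α b) (hirr : ∀ q : ℚ, α 0 ≠ q)
    (n : ℕ) : (p : ℝ) ≤ ‖α (n + 1)‖ ∨ (p : ℝ) ≤ ‖α (n + 2)‖ := by
  rcases Nat.even_or_odd (n + 1) with he | ho
  · exact .inr (Padic.natCast_le_norm_of_one_lt_norm (halg.one_lt_norm_of_odd hirr he.add_one))
  · exact .inl (Padic.natCast_le_norm_of_one_lt_norm (halg.one_lt_norm_of_odd hirr ho))

theorem norm_digit (halg : Alg3 p α b) (hirr : ∀ q : ℚ, α 0 ≠ q) {n : ℕ} (hn : 1 ≤ ‖α n‖) :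
    ‖(b n : ℚ_[p])‖ = ‖α n‖ := by
  refine (Padic.norm_eq_of_norm_sub_lt_left ?_).symm
  rcases Nat.even_or_odd n with he | ho
  · exact (halg.1 n he).2.2.trans_le hn
  · exact (halg.norm_sub_le_one n).trans_lt (halg.one_lt_norm_of_odd hirr ho)

theorem isPadicFrac (halg : Alg3 p α b) (n : ℕ) : IsPadicFrac p (b n) := by
  rcases Nat.even_or_odd n with hn | hn
  · exact (halg.1 n hn).1
  · exact (halg.2.1 n hn).1

theorem digit_eq_of_norm_sub (halg : Alg3 p α b) {m n : ℕ} (hmn : Even m ↔ Even n)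
    (hle : ‖(b m : ℚ_[p]) - b n‖ ≤ 1) (hlt : Even m → ‖(b m : ℚ_[p]) - b n‖ < 1) : b m = b n := by
  have hfrac := (halg.isPadicFrac m).sub (halg.isPadicFrac n)
  have habs := abs_sub (b m) (b n)
  rw [← sub_eq_zero]
  rcases Nat.even_or_odd m with hm | hm
  · have hn := hmn.mp hm
    refine hfrac.eq_zero_of_abs_lt (n := 1) ?_ ?_
    · push_cast
      simpa using (Padic.norm_lt_pow_iff_norm_le_pow_sub_one _ 0).mp (by simpa using hlt hm)
    · linarith [(halg.1 m hm).2.1, (halg.1 n hn).2.1]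
  · have hn : Odd n := Nat.not_even_iff_odd.mp (hmn.not.mp (Nat.not_even_iff_odd.mpr hm))
    refine hfrac.eq_zero_of_abs_lt (n := 0) ?_ ?_
    · push_cast
      simpa using hle
    · linarith [(halg.2.1 m hm).2.1, (halg.2.1 n hn).2.1]

theorem eventually_periodic (halg : Alg3 p α b) (hirr : ∀ q : ℚ, α 0 ≠ q) {h k : ℕ}
    (hk : 1 ≤ k) (hper : ∀ n, h ≤ n → b (n + k) = b n) : ∀ n, h ≤ n → α (n + k) = α n := by
  obtain ⟨B, hB⟩ := exists_forall_le_of_eventually_periodic (f := fun n => ‖(b n : ℚ_[p])‖) hk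
    fun n (hn : h ≤ n) => by simp only [hper n hn]
  have hαB (n : ℕ) : ‖α n‖ ≤ max 1 B :=
    IsUltrametricDist.norm_le_max_of_norm_sub_le (halg.norm_sub_le_one n) (hB n)
  intro n hn
  exact eq_of_orbits_bounded (Nat.one_lt_cast.mpr (Fact.out : p.Prime).one_lt)
    (u := fun m => α (n + k + m)) (v := fun m => α (n + m)) (a := fun m => (b (n + m) : ℚ_[p]))
    (fun m => by rw [← hper (n + m) (by omega), add_right_comm n m k]; exact halg.2.2 _)
    (fun _ => halg.2.2 _) (fun _ => halg.one_le_norm_succ hirr _)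
    (fun _ => halg.one_le_norm_succ hirr _)
    (fun _ => halg.natCast_le_norm_add_one_or_add_two hirr _)
    (fun _ => hαB _) (fun _ => hαB _)

theorem conj_norm_le_one (halg : Alg3 p α b) (hirr : ∀ q : ℚ, α 0 ≠ q) (hα0 : 1 ≤ ‖α 0‖)
    (hβ : ∀ n, β (n + 1) = (β n - b n)⁻¹) {n₀ : ℕ} (h₀ : ‖β n₀‖ < 1) :
    ∀ n, n₀ ≤ n → ‖β n‖ ≤ 1 ∧ (Even n → ‖β n‖ < 1) := by
  intro n hn
  induction n, hn using Nat.le_induction with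
  | base => exact ⟨h₀.le, fun _ => h₀⟩
  | succ n _ ih =>
    have hαn := halg.one_le_norm hirr hα0 n
    have hb := halg.norm_digit hirr hαn
    have hnext (h : ‖β n‖ < ‖α n‖) : ‖β (n + 1)‖ = ‖α n‖⁻¹ := by
      rw [hβ, norm_inv, norm_sub_rev, ← hb, ← Padic.norm_eq_of_norm_sub_lt_left]
      rwa [sub_sub_cancel, hb]
    rcases Nat.even_or_odd n with he | ho
    · rw [hnext ((ih.2 he).trans_le hαn)]
      exact ⟨inv_le_one_of_one_le₀ hαn, fun he' => absurd he (Nat.even_add_one.mp he')⟩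
    · have hαn' := halg.one_lt_norm_of_odd hirr ho
      rw [hnext (ih.1.trans_lt hαn')]
      exact ⟨(inv_lt_one_of_one_lt₀ hαn').le, fun _ => inv_lt_one_of_one_lt₀ hαn'⟩

theorem norm_conditions_of_periodic (halg : Alg3 p α b) (hirr : ∀ q : ℚ, α 0 ≠ q)
    (hβ : ∀ n, β (n + 1) = (β n - b n)⁻¹) (hconj : ∀ m n, α m = α n → β m = β n)
    (hαβ : α 0 ≠ β 0) {k : ℕ} (hk : 1 ≤ k) (hper : Function.Periodic b k) :
    1 ≤ ‖α 0‖ ∧ ‖β 0‖ < 1 := by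
  have hα : Function.Periodic α (2 * k) := fun n =>
    halg.eventually_periodic hirr (by omega) (fun n _ => hper.nat_mul 2 n) n n.zero_le
  have hβper : Function.Periodic β (2 * k) := fun n => hconj _ _ (hα n)
  have hα0 : 1 ≤ ‖α 0‖ := by
    have := halg.one_le_norm_succ hirr (2 * k - 1)
    rwa [Nat.sub_add_cancel (by omega), ← zero_add (2 * k), hα] at this
  obtain ⟨B, hB⟩ := exists_forall_le_of_eventually_periodic (f := fun n => ‖(b n : ℚ_[p])‖) hk
    fun n (_ : 0 ≤ n) => by simp only [hper n]
  obtain ⟨n₀, hn₀⟩ : ∃ n₀, ‖β n₀‖ < 1 := by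
    by_contra! hβ1
    have hβB (n : ℕ) : ‖β n‖ ≤ max 1 B := by
      refine IsUltrametricDist.norm_le_max_of_norm_sub_le ?_ (hB n)
      rw [← inv_inv (β n - b n), norm_inv, ← hβ]
      exact inv_le_one_of_one_le₀ (hβ1 _)
    exact hαβ (eq_of_orbits_bounded (Nat.one_lt_cast.mpr (Fact.out : p.Prime).one_lt) hβ halg.2.2
      (fun n => hβ1 _) (halg.one_le_norm_succ hirr)
      (halg.natCast_le_norm_add_one_or_add_two hirr) hβB
      fun n => IsUltrametricDist.norm_le_max_of_norm_sub_le (halg.norm_sub_le_one n) (hB n)).symm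
  refine ⟨hα0, ?_⟩
  have := (halg.conj_norm_le_one hirr hα0 hβ hn₀ (n₀ * (2 * k))
    (Nat.le_mul_of_pos_right _ (by omega))).2 ⟨n₀ * k, by ring⟩
  rwa [show β (n₀ * (2 * k)) = β 0 by simpa using hβper.nat_mul_eq n₀] at this

theorem periodic_of_norm_conditions (halg : Alg3 p α b) (hirr : ∀ q : ℚ, α 0 ≠ q)
    (hβ : ∀ n, β (n + 1) = (β n - b n)⁻¹) (hconj : ∀ m n, α m = α n → β m = β n)
    (hα0 : 1 ≤ ‖α 0‖) (hβ0 : ‖β 0‖ < 1) {h k : ℕ} (hk : 1 ≤ k)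
    (hper : ∀ n, h ≤ n → b (n + k) = b n) : Function.Periodic b (2 * k) := by
  -- An even period is needed: the parity of `n` decides whether `b n` is `s (α n)` or `t (α n)`.
  have hper2 (n : ℕ) (hn : h ≤ n) : b (n + 2 * k) = b n := by
    rw [two_mul, ← add_assoc, hper _ (by omega), hper _ hn]
  have hβper (n : ℕ) (hn : h ≤ n) : β (n + 2 * k) = β n :=
    hconj _ _ (halg.eventually_periodic hirr (by omega) hper2 n hn)
  have hβinv (n : ℕ) : β n = (β (n + 1))⁻¹ + b n := by rw [hβ, inv_inv, sub_add_cancel]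
  have hβle := halg.conj_norm_le_one hirr hα0 hβ hβ0
  have hstep (n : ℕ) (hn : β (n + 1 + 2 * k) = β (n + 1)) : b (n + 2 * k) = b n := by
    have hdiff : (b (n + 2 * k) : ℚ_[p]) - b n = β (n + 2 * k) - β n := by
      rw [hβinv (n + 2 * k), hβinv n, add_right_comm, hn]; ring
    have hmax := IsUltrametricDist.norm_sub_le_max (β (n + 2 * k)) (β n)
    have h₁ := hβle (n + 2 * k) (Nat.zero_le _)
    have h₂ := hβle n (Nat.zero_le _)
    refine halg.digit_eq_of_norm_sub (by simp [Nat.even_add]) ?_ fun he => ?_ <;>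
      rw [hdiff]
    · exact hmax.trans (max_le h₁.1 h₂.1)
    · have he' : Even n := by simpa [Nat.even_add] using he
      exact hmax.trans_lt (max_lt (h₁.2 he) (h₂.2 he'))
  have hβall (n : ℕ) : β (n + 2 * k) = β n := by
    rcases le_total h n with hn | hn
    · exact hβper n hn
    · refine Nat.decreasingInduction (motive := fun n _ => β (n + 2 * k) = β n)
        (fun n _ ih => ?_) (hβper h le_rfl) hn
      rw [hβinv, hβinv n, add_right_comm, ih, hstep n ih]
  exact fun n => hstep n (hβall (n + 1))

end Alg3

theorem stmt_7_general (p : ℕ) [Fact p.Prime]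
    (α₀ : ℚ_[p]) (hirr : ∀ q : ℚ, α₀ ≠ (q : ℚ_[p]))
    (r s : ℚ) (hquad : α₀ ^ 2 = (r : ℚ_[p]) * α₀ + (s : ℚ_[p]))
    (α : ℕ → ℚ_[p]) (b : ℕ → ℚ) (h0 : α 0 = α₀) (halg : Alg3 p α b)
    (hper : ∃ h k : ℕ, 1 ≤ k ∧ ∀ n, h ≤ n → b (n + k) = b n) :
    (∃ k : ℕ, 1 ≤ k ∧ ∀ n, b (n + k) = b n) ↔
      (1 ≤ ‖α₀‖ ∧ ‖(r : ℚ_[p]) - α₀‖ < 1) := by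
  obtain ⟨σ, hσ⟩ := exists_algHom_adjoin_gen_eq hirr hquad
  obtain ⟨β, hβ0, hβ, hconj⟩ := exists_conj_orbit σ h0 halg.2.2
  rw [hσ] at hβ0
  subst h0
  have hαβ : α 0 ≠ β 0 := fun h => hirr (r / 2) (by push_cast; linear_combination h / 2 + hβ0 / 2)
  rw [← hβ0]
  constructor
  · rintro ⟨k, hk, hpure⟩
    exact halg.norm_conditions_of_periodic hirr hβ hconj hαβ hk hpure
  · rintro ⟨hα0, hβ0lt⟩
    obtain ⟨h, k, hk, hper⟩ := hper
    exact ⟨2 * k, by omega, halg.periodic_of_norm_conditions hirr hβ hconj hα0 hβ0lt hk hper⟩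

/-- For `α₀` a quadratic irrational (with `α₀² = r·α₀ + s`, conjugate `r - α₀`)
whose Algorithm (3) expansion is periodic, the expansion is purely periodic iff
`‖α₀‖_p ≥ 1` and `‖ᾱ₀‖_p < 1`. -/
theorem stmt_7 (p : ℕ) [Fact p.Prime] (hp : p ≠ 2)
    (α₀ : ℚ_[p]) (hirr : ∀ q : ℚ, α₀ ≠ (q : ℚ_[p]))
    (r s : ℚ) (hquad : α₀ ^ 2 = (r : ℚ_[p]) * α₀ + (s : ℚ_[p]))
    (α : ℕ → ℚ_[p]) (b : ℕ → ℚ) (h0 : α 0 = α₀) (halg : Alg3 p α b)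
    (hper : ∃ h k : ℕ, 1 ≤ k ∧ ∀ n, h ≤ n → b (n + k) = b n) :
    (∃ k : ℕ, 1 ≤ k ∧ ∀ n, b (n + k) = b n) ↔
      (1 ≤ ‖α₀‖ ∧ ‖(r : ℚ_[p]) - α₀‖ < 1) :=
  stmt_7_general p α₀ hirr r s hquad α b h0 halg hper
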